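/- Let x ∈ ℕ and let α be an x-lean ordinal in Cantor normal form below ε₀ (all coefficients at every exponent level are ≤ x). Then for every ordinal γ in CNF: α < γ if and only if α ⊑_x P_x(γ), and also if and only if α ⊏_x γ, and also if and only if α ≤ P_x(γ). -/

import Mathlib

/-!
Both descent steps, γ + 1 ↦ γ and λ ↦ λ_x, strictly decrease in the CNF ordering, which is well
founded (the ordinal interpretation is strictly monotone on CNF terms), so everything is proved by
induction along the descent γ ↦ P_x(γ). The key fact is that an x-lean α < λ satisfies α ≤ λ_x:
at the bottom of the recursion λ_x replaces a summand ω^{β+1} by ω^β·(x+1), and α, having at most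
x copies of ω^β, stays below that block. Since λ_x carries the coefficient x + 1 it is not x-lean,
so even α < λ_x, and the descent can continue.
-/

/-- Ordinal terms below ε₀: a term is a list of exponents,
`cons β γ` denoting ω^β + γ. -/
inductive OT : Type
  | nil : OT
  | cons : OT → OT → OT
deriving DecidableEq

namespace OT

/-- The term 1 = ω^0. -/
def one : OT := cons nil nil

/-- Syntactic concatenation (direct sum) of ordinal terms. -/
def add : OT → OT → OT
  | nil, b => b
  | cons e r, b => cons e (add r b)

/-- A term ω^{β₁}+...+ω^{β_m} is a successor iff m > 0 and β_m = 0. -/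
def isSucc : OT → Bool
  | nil => false
  | cons e nil => e == nil
  | cons _ (cons e r) => isSucc (cons e r)

/-- Remove the last summand ω^0 of a successor term. -/
def pred : OT → OT
  | nil => nil
  | cons _ nil => nil
  | cons e (cons e' r) => cons e (pred (cons e' r))

/-- Limit terms. -/
def isLim (a : OT) : Prop := a ≠ nil ∧ isSucc a = false

/-- ω^β · n as an ordinal term. -/
def rep : ℕ → OT → OT
  | 0, _ => nil
  | n + 1, β => cons β (rep n β)

/-- The standard assignment of fundamental sequences (with ω_x = x+1):
(γ+ω^{β+1})_x = γ+ω^β·(x+1) and (γ+ω^λ)_x = γ+ω^{λ_x}. -/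
def fseq : OT → ℕ → OT
  | nil, _ => nil
  | cons β nil, x =>
      if β = nil then nil
      else if isSucc β then rep (x + 1) (pred β)
      else cons (fseq β x) nil
  | cons β (cons e r), x => cons β (fseq (cons e r) x)

/-- Syntactic ordering of terms (on CNF terms this is the ordinal ordering). -/
def lt : OT → OT → Prop
  | _, nil => False
  | nil, cons _ _ => True
  | cons a r, cons b s => lt a b ∨ (a = b ∧ lt r s)

def le (a b : OT) : Prop := lt a b ∨ a = b

/-- Cantor normal form: exponents weakly decreasing, all in CNF. -/
def isCNF : OT → Prop
  | nil => True
  | cons b nil => isCNF b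
  | cons b (cons e r) => isCNF b ∧ le e b ∧ isCNF (cons e r)

/-- Number of occurrences of the exponent β in a term. -/
def count (β : OT) : OT → ℕ
  | nil => 0
  | cons b r => (if b = β then 1 else 0) + count β r

/-- k-lean: every coefficient (at every level) is ≤ k. -/
def leanOrd (k : ℕ) : OT → Prop
  | nil => True
  | cons b r => count b (cons b r) ≤ k ∧ leanOrd k b ∧ leanOrd k r

end OT

/-- Pointwise-at-x ordering: smallest transitive relation with
α ⊏_x α+1 and λ_x ⊏_x λ. -/
inductive Ptw (x : ℕ) : OT → OT → Prop
  | succ (a : OT) : Ptw x a (OT.add a OT.one)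
  | lim (l : OT) : OT.isLim l → Ptw x (OT.fseq l x) l
  | trans {a b c : OT} : Ptw x a b → Ptw x b c → Ptw x a c

namespace OT

protected theorem not_lt_nil (a : OT) : ¬ lt a nil := by cases a <;> simp [lt]

theorem nil_lt_cons (e r : OT) : lt nil (cons e r) := trivial

theorem nil_le : ∀ a : OT, le nil a
  | nil => Or.inr rfl
  | cons e r => Or.inl (nil_lt_cons e r)

protected theorem lt_trans : ∀ {a b c : OT}, lt a b → lt b c → lt a c
  | _, b, nil, _, hbc => absurd hbc (OT.not_lt_nil b)
  | nil, _, cons c r, _, _ => nil_lt_cons c r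
  | cons _ _, nil, cons _ _, hab, _ => absurd hab (OT.not_lt_nil _)
  | cons _ _, cons _ _, cons _ _, hab, hbc => by
      rcases hab with h | ⟨rfl, h⟩ <;> rcases hbc with h' | ⟨rfl, h'⟩
      · exact Or.inl (OT.lt_trans h h')
      · exact Or.inl h
      · exact Or.inl h'
      · exact Or.inr ⟨rfl, OT.lt_trans h h'⟩

protected theorem lt_of_le_of_lt {a b c : OT} (h : le a b) (h' : lt b c) : lt a c :=
  h.elim (fun h => OT.lt_trans h h') (fun e => e ▸ h')

protected theorem le_trans {a b c : OT} (h : le a b) (h' : le b c) : le a c :=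
  h'.elim (fun h' => Or.inl (OT.lt_of_le_of_lt h h')) (fun e => e ▸ h)

theorem le_cons_cons_of_le {s t : OT} (β : OT) (h : le s t) : le (cons β s) (cons β t) :=
  h.imp (fun h => Or.inr ⟨rfl, h⟩) (congrArg _)

theorem le_of_lt_cons_cons {a r b s : OT} (h : lt (cons a r) (cons b s)) : le a b :=
  h.imp id And.left

theorem lt_of_lt_cons_nil {a r b : OT} (h : lt (cons a r) (cons b nil)) : lt a b :=
  h.resolve_right fun h => OT.not_lt_nil r h.2

theorem isCNF_cons_iff {β s : OT} :
    isCNF (cons β s) ↔ isCNF β ∧ isCNF s ∧ ∀ e r, s = cons e r → le e β := by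
  cases s with
  | nil => simp [isCNF]
  | cons e r =>
    constructor
    · rintro ⟨hβ, he, hr⟩
      exact ⟨hβ, hr, by rintro _ _ ⟨⟩; exact he⟩
    · rintro ⟨hβ, hr, hhead⟩
      exact ⟨hβ, hhead e r rfl, hr⟩

theorem isCNF_of_cons_left {β s : OT} (h : isCNF (cons β s)) : isCNF β := (isCNF_cons_iff.1 h).1

theorem isCNF_of_cons_right {β s : OT} (h : isCNF (cons β s)) : isCNF s :=
  (isCNF_cons_iff.1 h).2.1

theorem ne_nil_of_lt {a g : OT} (h : lt a g) : g ≠ nil := by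
  rintro rfl
  exact OT.not_lt_nil a h

theorem isSucc_or_isLim {g : OT} (h : g ≠ nil) : isSucc g = true ∨ isLim g := by
  cases hs : isSucc g
  · exact Or.inr ⟨h, hs⟩
  · exact Or.inl rfl

@[elab_as_elim]
theorem isSucc_induction {motive : ∀ b, isSucc b = true → Prop}
    (one : motive (cons nil nil) rfl)
    (cons_cons : ∀ e e' r (h : isSucc (cons e' r) = true), motive (cons e' r) h →
      motive (cons e (cons e' r)) h) :
    ∀ b h, motive b h
  | nil, h => absurd h Bool.false_ne_true
  | cons e nil, h => by
      obtain rfl : e = nil := by simpa [isSucc] using h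
      exact one
  | cons e (cons e' r), h => cons_cons e e' r h (isSucc_induction one cons_cons (cons e' r) h)

protected theorem lt_add_one : ∀ a : OT, lt a (add a one)
  | nil => nil_lt_cons nil nil
  | cons _ r => Or.inr ⟨rfl, OT.lt_add_one r⟩

theorem pred_lt {b : OT} (hb : isSucc b = true) : lt (pred b) b := by
  induction b, hb using isSucc_induction with
  | one => exact nil_lt_cons nil nil
  | cons_cons e _ _ _ ih => exact Or.inr ⟨rfl, ih⟩

theorem add_pred_one {b : OT} (hb : isSucc b = true) : add (pred b) one = b := by
  induction b, hb using isSucc_induction with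
  | one => rfl
  | cons_cons e _ _ _ ih => exact congrArg (cons e) ih

theorem isCNF_pred {b : OT} (hb : isSucc b = true) (hc : isCNF b) : isCNF (pred b) := by
  induction b, hb using isSucc_induction with
  | one => trivial
  | cons_cons e e' r hs ih =>
    obtain ⟨he, hr, hhead⟩ := isCNF_cons_iff.1 hc
    refine isCNF_cons_iff.2 ⟨he, ih hr, ?_⟩
    rintro f t ht
    exact OT.le_trans (le_of_lt_cons_cons (ht ▸ pred_lt hs)) (hhead e' r rfl)

theorem le_pred_of_lt {a b : OT} (hb : isSucc b = true) (h : lt a b) : le a (pred b) := by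
  induction b, hb using isSucc_induction generalizing a with
  | one =>
    rcases a with _ | ⟨c, r⟩
    · exact Or.inr rfl
    · exact absurd (lt_of_lt_cons_nil h) (OT.not_lt_nil c)
  | cons_cons e _ _ _ ih =>
    rcases a with _ | ⟨c, s⟩
    · exact nil_le _
    · rcases h with h | ⟨rfl, h⟩
      · exact Or.inl (Or.inl h)
      · exact le_cons_cons_of_le c (ih h)

theorem isCNF_rep (β : OT) (hβ : isCNF β) : ∀ n, isCNF (rep n β)
  | 0 => trivial
  | n + 1 => isCNF_cons_iff.2 ⟨hβ, isCNF_rep β hβ n, by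
      rintro e r h
      cases n <;> cases h
      exact Or.inr rfl⟩

theorem count_rep (β : OT) : ∀ n, count β (rep n β) = n
  | 0 => rfl
  | n + 1 => by rw [rep, count, if_pos rfl, count_rep β n, Nat.add_comm]

theorem lt_rep_of_count_lt {β : OT} : ∀ {a : OT} {n : ℕ}, isCNF a →
    (∀ e r, a = cons e r → le e β) → count β a < n → lt a (rep n β)
  | nil, n + 1, _, _, _ => nil_lt_cons _ _
  | cons e r, n + 1, ha, hhead, hn => by
      rcases hhead e r rfl with h | rfl
      · exact Or.inl h
      · obtain ⟨-, hr, hrhead⟩ := isCNF_cons_iff.1 ha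
        refine Or.inr ⟨rfl, lt_rep_of_count_lt hr hrhead ?_⟩
        rw [count, if_pos rfl] at hn
        omega

section FundamentalSequence

theorem ne_nil_of_isSucc {β : OT} (h : isSucc β = true) : β ≠ nil := by
  rintro rfl
  cases h

theorem isLim_cons_nil {β : OT} (h : β ≠ nil) : isLim (cons β nil) :=
  ⟨OT.noConfusion, by simpa [isSucc] using h⟩

theorem isLim_cons_cons (β : OT) {e r : OT} (h : isLim (cons e r)) : isLim (cons β (cons e r)) :=
  ⟨OT.noConfusion, h.2⟩

@[elab_as_elim]
theorem isLim_induction {motive : ∀ l, isLim l → Prop}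
    (succ_exp : ∀ β (hs : isSucc β = true),
      motive (cons β nil) (isLim_cons_nil (ne_nil_of_isSucc hs)))
    (lim_exp : ∀ β (hl : isLim β), motive β hl → motive (cons β nil) (isLim_cons_nil hl.1))
    (cons_cons : ∀ β e r (hl : isLim (cons e r)), motive (cons e r) hl →
      motive (cons β (cons e r)) (isLim_cons_cons β hl)) :
    ∀ l hl, motive l hl
  | nil, h => absurd rfl h.1
  | cons β nil, h => by
      have hβ : β ≠ nil := by
        rintro rfl
        exact absurd h.2 (by simp [isSucc])
      rcases isSucc_or_isLim hβ with hs | hl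
      · exact succ_exp β hs
      · exact lim_exp β hl (isLim_induction succ_exp lim_exp cons_cons β hl)
  | cons β (cons e r), h =>
      have ht : isLim (cons e r) := ⟨OT.noConfusion, h.2⟩
      cons_cons β e r ht (isLim_induction succ_exp lim_exp cons_cons (cons e r) ht)

variable (x : ℕ)

theorem fseq_cons_nil_of_isSucc {β : OT} (h : isSucc β = true) :
    fseq (cons β nil) x = rep (x + 1) (pred β) := by
  simp [fseq, ne_nil_of_isSucc h, h]

theorem fseq_cons_nil_of_isLim {β : OT} (h : isLim β) :
    fseq (cons β nil) x = cons (fseq β x) nil := by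
  simp [fseq, h.1, h.2]

theorem fseq_cons_cons (β e r : OT) : fseq (cons β (cons e r)) x = cons β (fseq (cons e r) x) :=
  rfl

theorem fseq_ne_nil {l : OT} (hl : isLim l) : fseq l x ≠ nil := by
  induction l, hl using isLim_induction with
  | succ_exp β hs => simp [fseq_cons_nil_of_isSucc x hs, rep]
  | lim_exp β hβ => simp [fseq_cons_nil_of_isLim x hβ]
  | cons_cons => simp [fseq_cons_cons]

theorem fseq_lt {l : OT} (hl : isLim l) : lt (fseq l x) l := by
  induction l, hl using isLim_induction with
  | succ_exp β hs =>
    rw [fseq_cons_nil_of_isSucc x hs]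
    exact Or.inl (pred_lt hs)
  | lim_exp β hβ ih =>
    rw [fseq_cons_nil_of_isLim x hβ]
    exact Or.inl ih
  | cons_cons β e r _ ih => exact Or.inr ⟨rfl, ih⟩

theorem isCNF_fseq {l : OT} (hl : isLim l) (hc : isCNF l) : isCNF (fseq l x) := by
  induction l, hl using isLim_induction with
  | succ_exp β hs =>
    rw [fseq_cons_nil_of_isSucc x hs]
    exact isCNF_rep _ (isCNF_pred hs hc) _
  | lim_exp β hβ ih =>
    rw [fseq_cons_nil_of_isLim x hβ]
    exact ih hc
  | cons_cons β e r hl ih =>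
    obtain ⟨hβ, hr, hhead⟩ := isCNF_cons_iff.1 hc
    refine isCNF_cons_iff.2 ⟨hβ, ih hr, ?_⟩
    rintro f t ht
    exact OT.le_trans (le_of_lt_cons_cons (ht ▸ fseq_lt x hl)) (hhead e r rfl)

theorem not_leanOrd_fseq {l : OT} (hl : isLim l) : ¬ leanOrd x (fseq l x) := by
  induction l, hl using isLim_induction with
  | succ_exp β hs =>
    rw [fseq_cons_nil_of_isSucc x hs]
    intro h
    have hcount : count (pred β) (rep (x + 1) (pred β)) ≤ x := h.1
    rw [count_rep] at hcount
    omega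
  | lim_exp β hβ ih =>
    rw [fseq_cons_nil_of_isLim x hβ]
    exact fun h => ih h.2.1
  | cons_cons _ _ _ _ ih => exact fun h => ih h.2.2

theorem le_fseq_of_lt {l a : OT} (hl : isLim l) (ha : leanOrd x a) (hac : isCNF a)
    (h : lt a l) : le a (fseq l x) := by
  induction l, hl using isLim_induction generalizing a with
  | succ_exp β hs =>
    rw [fseq_cons_nil_of_isSucc x hs]
    rcases a with _ | ⟨c, r⟩
    · exact nil_le _
    rcases le_pred_of_lt hs (lt_of_lt_cons_nil h) with hc | rfl
    · exact Or.inl (Or.inl hc)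
    · refine Or.inl (lt_rep_of_count_lt hac (fun e r he => ?_) (Nat.lt_succ_of_le ha.1))
      cases he
      exact Or.inr rfl
  | lim_exp β hβ ih =>
    rw [fseq_cons_nil_of_isLim x hβ]
    rcases a with _ | ⟨c, r⟩
    · exact nil_le _
    rcases ih ha.2.1 (isCNF_of_cons_left hac) (lt_of_lt_cons_nil h) with hc | rfl
    · exact Or.inl (Or.inl hc)
    · exact absurd ha.2.1 (not_leanOrd_fseq x hβ)
  | cons_cons β e r _ ih =>
    rcases a with _ | ⟨c, s⟩
    · exact nil_le _
    rcases h with h | ⟨rfl, h⟩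
    · exact Or.inl (Or.inl h)
    · exact le_cons_cons_of_le c (ih ha.2.2 (isCNF_of_cons_right hac) h)

end FundamentalSequence

section WellFounded

open Ordinal

noncomputable def repr : OT → Ordinal.{0}
  | nil => 0
  | cons e r => ω ^ repr e + repr r

theorem omega0_opow_lt_opow_succ (o : Ordinal) : ω ^ o < ω ^ Order.succ o :=
  (opow_lt_opow_iff_right one_lt_omega0).2 (Order.lt_succ o)

mutual

theorem repr_lt_opow_succ :
    ∀ {e r : OT}, isCNF (cons e r) → repr (cons e r) < ω ^ Order.succ (repr e)
  | e, nil, _ => by simpa [repr] using omega0_opow_lt_opow_succ (repr e)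
  | e, cons e' r', h => by
      obtain ⟨he, hr, hhead⟩ := isCNF_cons_iff.1 h
      have he'e : repr e' ≤ repr e := (hhead e' r' rfl).elim
        (fun hlt => (repr_lt_repr (isCNF_of_cons_left hr) he hlt).le) (fun h => h ▸ le_rfl)
      have htail : repr (cons e' r') < ω ^ Order.succ (repr e) :=
        (repr_lt_opow_succ hr).trans_le
          (opow_le_opow_right omega0_pos (Order.succ_le_succ he'e))
      exact isPrincipal_add_omega0_opow _ (omega0_opow_lt_opow_succ (repr e)) htail
termination_by e r => sizeOf e + sizeOf r

theorem repr_lt_repr : ∀ {a b : OT}, isCNF a → isCNF b → lt a b → repr a < repr b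
  | _, nil, _, _, h => absurd h (OT.not_lt_nil _)
  | nil, cons e s, _, _, _ =>
      (opow_pos _ omega0_pos).trans_le le_self_add
  | cons c r, cons e s, ha, hb, h => by
      rcases h with h | ⟨rfl, h⟩
      · calc repr (cons c r) < ω ^ Order.succ (repr c) := repr_lt_opow_succ ha
          _ ≤ ω ^ repr e := opow_le_opow_right omega0_pos
              (Order.succ_le_of_lt (repr_lt_repr (isCNF_of_cons_left ha) (isCNF_of_cons_left hb) h))
          _ ≤ ω ^ repr e + repr s := le_self_add
      · exact (add_lt_add_iff_left _).2
          (repr_lt_repr (isCNF_of_cons_right ha) (isCNF_of_cons_right hb) h)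
termination_by a b => sizeOf a + sizeOf b

end

@[elab_as_elim]
theorem isCNF_induction {motive : ∀ g, isCNF g → Prop}
    (ind : ∀ g hg, (∀ a ha, lt a g → motive a ha) → motive g hg) (g : OT) (hg : isCNF g) :
    motive g hg :=
  (InvImage.wf (fun a : {a // isCNF a} => repr a.1) wellFounded_lt).induction
    (C := fun a => motive a.1 a.2) ⟨g, hg⟩
    (fun a ih => ind a.1 a.2 fun b hb hba => ih ⟨b, hb⟩ (repr_lt_repr hb a.2 hba))

end WellFounded

section Predecessor

variable {x : ℕ} {P : OT → OT}

theorem isCNF_P_and_P_lt (hPs : ∀ b, isSucc b = true → P b = pred b)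
    (hPl : ∀ b, isLim b → P b = P (fseq b x)) {g : OT} (hg : isCNF g) (hne : g ≠ nil) :
    isCNF (P g) ∧ lt (P g) g := by
  induction g, hg using isCNF_induction with
  | ind g hg ih =>
    rcases isSucc_or_isLim hne with hs | hl
    · rw [hPs g hs]
      exact ⟨isCNF_pred hs hg, pred_lt hs⟩
    · rw [hPl g hl]
      have hlt := fseq_lt x hl
      obtain ⟨hcnf, hPlt⟩ := ih _ (isCNF_fseq x hl hg) hlt (fseq_ne_nil x hl)
      exact ⟨hcnf, OT.lt_trans hPlt hlt⟩

theorem le_P_of_lt (hPs : ∀ b, isSucc b = true → P b = pred b)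
    (hPl : ∀ b, isLim b → P b = P (fseq b x)) {a g : OT} (ha : leanOrd x a) (hac : isCNF a)
    (hg : isCNF g) (h : lt a g) : le a (P g) := by
  induction g, hg using isCNF_induction with
  | ind g hg ih =>
    rcases isSucc_or_isLim (ne_nil_of_lt h) with hs | hl
    · rw [hPs g hs]
      exact le_pred_of_lt hs h
    · rw [hPl g hl]
      rcases le_fseq_of_lt x hl ha hac h with hlt | rfl
      · exact ih _ (isCNF_fseq x hl hg) (fseq_lt x hl) hlt
      · exact absurd ha (not_leanOrd_fseq x hl)

end Predecessor

end OT

namespace Ptw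

variable {x : ℕ}

theorem lt {a b : OT} (h : Ptw x a b) : OT.lt a b := by
  induction h with
  | succ a => exact OT.lt_add_one a
  | lim l hl => exact OT.fseq_lt x hl
  | trans _ _ ih₁ ih₂ => exact OT.lt_trans ih₁ ih₂

theorem pred {b : OT} (hb : OT.isSucc b = true) : Ptw x (OT.pred b) b := by
  simpa only [OT.add_pred_one hb] using Ptw.succ (x := x) (OT.pred b)

theorem of_lt {a g : OT} (ha : OT.leanOrd x a) (hac : OT.isCNF a) (hg : OT.isCNF g)
    (h : OT.lt a g) : Ptw x a g := by
  induction g, hg using OT.isCNF_induction with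
  | ind g hg ih =>
    have descend : ∀ b, OT.isCNF b → OT.lt b g → Ptw x b g → OT.le a b → Ptw x a g :=
      fun b hb hbg hstep hab => hab.elim (fun hab => (ih b hb hbg hab).trans hstep) (· ▸ hstep)
    rcases OT.isSucc_or_isLim (OT.ne_nil_of_lt h) with hs | hl
    · exact descend _ (OT.isCNF_pred hs hg) (OT.pred_lt hs) (Ptw.pred hs) (OT.le_pred_of_lt hs h)
    · exact descend _ (OT.isCNF_fseq x hl hg) (OT.fseq_lt x hl) (Ptw.lim g hl)
        (OT.le_fseq_of_lt x hl ha hac h)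

end Ptw

/-- For x-lean α in CNF and γ ≠ 0 in CNF:
α < γ iff α ⊑_x P_x(γ) iff α ⊏_x γ iff α ≤ P_x(γ). -/
theorem stmt18 (x : ℕ) (a : OT) (hlean : OT.leanOrd x a) (hcnf : OT.isCNF a)
    (P : ℕ → OT → OT)
    (hPs : ∀ y b, OT.isSucc b = true → P y b = OT.pred b)
    (hPl : ∀ y b, OT.isLim b → P y b = P y (OT.fseq b y)) :
    ∀ g : OT, OT.isCNF g → g ≠ OT.nil →
      ((OT.lt a g ↔ (Ptw x a (P x g) ∨ a = P x g)) ∧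
       (OT.lt a g ↔ Ptw x a g) ∧
       (OT.lt a g ↔ OT.le a (P x g))) := by
  intro g hg hne
  obtain ⟨hPcnf, hPlt⟩ := OT.isCNF_P_and_P_lt (hPs x) (hPl x) hg hne
  have hle : OT.lt a g ↔ OT.le a (P x g) :=
    ⟨OT.le_P_of_lt (hPs x) (hPl x) hlean hcnf hg, fun h => OT.lt_of_le_of_lt h hPlt⟩
  have hptw : ∀ {b}, OT.isCNF b → (Ptw x a b ↔ OT.lt a b) :=
    fun hb => ⟨Ptw.lt, Ptw.of_lt hlean hcnf hb⟩
  refine ⟨?_, (hptw hg).symm, hle⟩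
  rw [hle, hptw hPcnf]
  rfl
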